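/- arXiv:1410.7302 — 2 statements merged into one kernel-verified Lean document; each statement's English description precedes it below -/
import Mathlib

section
/- There exist constants k > 0 and k' > 0 depending only on n such that for every integer d ≥ 1 one has k·d^(2n) ≤ a(d) ≤ k'·d^(2n). -/
/-- The Weyl dimension formula value `W(n,r)`: the dimension of the simple
`sp(2n,ℂ)`-module of highest weight `(r,0,…,0)`. -/
noncomputable def W (n r : ℕ) : ℚ :=
  ((2 * n + 2 * r : ℚ) *
      ∏ j ∈ Finset.Icc 2 n, (((r : ℚ) + (j : ℚ) - 1) * ((2 * n : ℚ) + (r : ℚ) - (j : ℚ) + 1))) /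
  ((2 * n : ℚ) * ∏ j ∈ Finset.Icc 2 n, (((j : ℚ) - 1) * ((2 * n : ℚ) - (j : ℚ) + 1)))

/-- `g(i) = W(n,i)` for `i ≥ 0` and `g(i) = W(n,-1-i)` for `i < 0`. -/
noncomputable def g (n : ℕ) (i : ℤ) : ℚ :=
  if 0 ≤ i then W n i.toNat else W n (-1 - i).toNat

/-- `a(d) = Σ_{i ∈ I_d} 2^(2n)·(g(i) + g(i-1))` where
`I_d = {i ∈ ℤ : |i| ≤ d, i ≡ d (mod 2)}`: the dimension of the `d`-th term of the
minimal projective resolution of the trivial `osp(2|2n)`-module. -/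
noncomputable def a (n d : ℕ) : ℚ :=
  ∑ i ∈ (Finset.Icc (-(d : ℤ)) (d : ℤ)).filter (fun i => i % 2 = (d : ℤ) % 2),
    2 ^ (2 * n) * (g n i + g n (i - 1))

noncomputable def Dq (n : ℕ) : ℚ :=
  (2 * n : ℚ) * ∏ j ∈ Finset.Icc 2 n, (((j : ℚ) - 1) * ((2 * n : ℚ) - (j : ℚ) + 1))

noncomputable def Nq (n : ℕ) (x : ℚ) : ℚ :=
  (2 * n + 2 * x) * ∏ j ∈ Finset.Icc 2 n, ((x + (j : ℚ) - 1) * ((2 * n : ℚ) + x - (j : ℚ) + 1))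

lemma W_eq (n r : ℕ) : W n r = Nq n (r : ℚ) / Dq n := rfl

lemma jcast {n : ℕ} {j : ℕ} (hj : j ∈ Finset.Icc 2 n) :
    (2 : ℚ) ≤ (j : ℚ) ∧ (j : ℚ) ≤ (n : ℚ) := by
  rw [Finset.mem_Icc] at hj
  exact ⟨by exact_mod_cast hj.1, by exact_mod_cast hj.2⟩

lemma Dq_pos {n : ℕ} (hn : 1 ≤ n) : 0 < Dq n := by
  have h1 : (1 : ℚ) ≤ (n : ℚ) := by exact_mod_cast hn
  refine mul_pos (by linarith) (Finset.prod_pos ?_)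
  intro j hj
  obtain ⟨h2, hn'⟩ := jcast hj
  exact mul_pos (by linarith) (by linarith)

lemma Nq_pos {n : ℕ} (hn : 1 ≤ n) {x : ℚ} (hx : 0 ≤ x) : 0 < Nq n x := by
  have h1 : (1 : ℚ) ≤ (n : ℚ) := by exact_mod_cast hn
  refine mul_pos (by linarith) (Finset.prod_pos ?_)
  intro j hj
  obtain ⟨h2, hn'⟩ := jcast hj
  exact mul_pos (by linarith) (by linarith)

lemma Nq_mono {n : ℕ} (hn : 1 ≤ n) {x y : ℚ} (hx : 0 ≤ x) (hxy : x ≤ y) :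
    Nq n x ≤ Nq n y := by
  have h1 : (1 : ℚ) ≤ (n : ℚ) := by exact_mod_cast hn
  refine mul_le_mul (by linarith) ?_ ?_ (by linarith)
  · refine Finset.prod_le_prod ?_ ?_
    · intro j hj; obtain ⟨h2, hn'⟩ := jcast hj
      exact mul_nonneg (by linarith) (by linarith)
    · intro j hj; obtain ⟨h2, hn'⟩ := jcast hj
      refine mul_le_mul (by linarith) (by linarith) (by linarith) (by linarith)
  · refine Finset.prod_nonneg ?_
    intro j hj; obtain ⟨h2, hn'⟩ := jcast hj
    exact mul_nonneg (by linarith) (by linarith)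

lemma Nq_lower {n : ℕ} (hn : 1 ≤ n) {x : ℚ} (hx : 1 ≤ x) :
    2 * x ^ (2 * n - 1) ≤ Nq n x := by
  have h1 : (1 : ℚ) ≤ (n : ℚ) := by exact_mod_cast hn
  have hx0 : (0 : ℚ) ≤ x := by linarith
  have hcard : (Finset.Icc 2 n).card = n - 1 := by
    rw [Nat.card_Icc]; omega
  have hprod : (x ^ 2) ^ (n - 1) ≤
      ∏ j ∈ Finset.Icc 2 n, ((x + (j : ℚ) - 1) * ((2 * n : ℚ) + x - (j : ℚ) + 1)) := by
    calc (x ^ 2) ^ (n - 1) = ∏ j ∈ Finset.Icc 2 n, x ^ 2 := by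
          rw [Finset.prod_const, hcard]
      _ ≤ _ := by
          refine Finset.prod_le_prod (fun j hj => by positivity) ?_
          intro j hj; obtain ⟨h2, hn'⟩ := jcast hj
          have : x * x ≤ (x + (j : ℚ) - 1) * ((2 * n : ℚ) + x - (j : ℚ) + 1) := by
            refine mul_le_mul (by linarith) (by linarith) (by linarith) (by linarith)
          calc x ^ 2 = x * x := sq x
            _ ≤ _ := this
  have hexp : 2 * n - 1 = 2 * (n - 1) + 1 := by omega
  have hpow : x ^ (2 * n - 1) = (x ^ 2) ^ (n - 1) * x := by
    rw [hexp, pow_succ, ← pow_mul]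
  calc 2 * x ^ (2 * n - 1) = (2 * x) * ((x ^ 2) ^ (n - 1)) := by rw [hpow]; ring
    _ ≤ Nq n x := by
        refine mul_le_mul (by linarith) hprod (by positivity) (by linarith)

lemma Nq_upper {n : ℕ} (hn : 1 ≤ n) {x : ℚ} (hx : 1 ≤ x) :
    Nq n x ≤ (2 * n + 2 : ℚ) ^ (2 * n - 1) * x ^ (2 * n - 1) := by
  have h1 : (1 : ℚ) ≤ (n : ℚ) := by exact_mod_cast hn
  have hx0 : (0 : ℚ) ≤ x := by linarith
  have hcard : (Finset.Icc 2 n).card = n - 1 := by rw [Nat.card_Icc]; omega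
  set C : ℚ := (2 * n + 2 : ℚ) * x with hC
  have hCx : x ≤ C := by nlinarith
  have hprod : ∏ j ∈ Finset.Icc 2 n, ((x + (j : ℚ) - 1) * ((2 * n : ℚ) + x - (j : ℚ) + 1))
      ≤ (C ^ 2) ^ (n - 1) := by
    calc _ ≤ ∏ j ∈ Finset.Icc 2 n, C ^ 2 := by
          refine Finset.prod_le_prod ?_ ?_
          · intro j hj; obtain ⟨h2, hn'⟩ := jcast hj
            exact mul_nonneg (by linarith) (by linarith)
          · intro j hj; obtain ⟨h2, hn'⟩ := jcast hj
            have hf1 : x + (j : ℚ) - 1 ≤ C := by nlinarith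
            have hf2 : (2 * n : ℚ) + x - (j : ℚ) + 1 ≤ C := by nlinarith
            calc (x + (j : ℚ) - 1) * ((2 * n : ℚ) + x - (j : ℚ) + 1) ≤ C * C := by
                  refine mul_le_mul hf1 hf2 (by linarith) (by nlinarith)
              _ = C ^ 2 := (sq C).symm
      _ = (C ^ 2) ^ (n - 1) := by rw [Finset.prod_const, hcard]
  have hexp : 2 * n - 1 = 2 * (n - 1) + 1 := by omega
  have hCpow : C ^ (2 * n - 1) = (C ^ 2) ^ (n - 1) * C := by
    rw [hexp, pow_succ, ← pow_mul]
  have hfirst : 2 * (n : ℚ) + 2 * x ≤ C := by nlinarith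
  have : Nq n x ≤ C * (C ^ 2) ^ (n - 1) := by
    refine mul_le_mul hfirst hprod ?_ ?_
    · refine Finset.prod_nonneg ?_
      intro j hj; obtain ⟨h2, hn'⟩ := jcast hj
      exact mul_nonneg (by linarith) (by linarith)
    · nlinarith
  calc Nq n x ≤ C * (C ^ 2) ^ (n - 1) := this
    _ = C ^ (2 * n - 1) := by rw [hCpow]; ring
    _ = (2 * n + 2 : ℚ) ^ (2 * n - 1) * x ^ (2 * n - 1) := by rw [hC, mul_pow]

lemma W_pos {n : ℕ} (hn : 1 ≤ n) (r : ℕ) : 0 < W n r := by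
  rw [W_eq]
  exact div_pos (Nq_pos hn (by positivity)) (Dq_pos hn)

lemma W_mono {n : ℕ} (hn : 1 ≤ n) {r s : ℕ} (hrs : r ≤ s) : W n r ≤ W n s := by
  rw [W_eq, W_eq, div_le_div_iff_of_pos_right (Dq_pos hn)]
  exact Nq_mono hn (by positivity) (by exact_mod_cast hrs)

lemma g_nonneg {n : ℕ} (hn : 1 ≤ n) (i : ℤ) : 0 ≤ g n i := by
  unfold g; split <;> exact (W_pos hn _).le

lemma g_le_W {n : ℕ} (hn : 1 ≤ n) {d : ℕ} {i : ℤ} (h1 : -(d : ℤ) - 1 ≤ i) (h2 : i ≤ d) :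
    g n i ≤ W n d := by
  unfold g; split
  · apply W_mono hn; omega
  · apply W_mono hn; omega

lemma g_lb {n : ℕ} (hn : 1 ≤ n) {i : ℤ} (hi : 1 ≤ i) :
    2 / Dq n * (i : ℚ) ^ (2 * n - 1) ≤ g n i := by
  have h0 : (0 : ℤ) ≤ i := by omega
  have hcast : ((i.toNat : ℕ) : ℚ) = (i : ℚ) := by exact_mod_cast Int.toNat_of_nonneg h0
  have hx : (1 : ℚ) ≤ (i : ℚ) := by exact_mod_cast hi
  unfold g
  rw [if_pos h0, W_eq, hcast]
  rw [div_mul_eq_mul_div, div_le_div_iff_of_pos_right (Dq_pos hn)]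
  exact Nq_lower hn hx

lemma W_ub {n : ℕ} (hn : 1 ≤ n) {d : ℕ} (hd : 1 ≤ d) :
    W n d ≤ (2 * n + 2 : ℚ) ^ (2 * n - 1) / Dq n * (d : ℚ) ^ (2 * n - 1) := by
  have hx : (1 : ℚ) ≤ (d : ℚ) := by exact_mod_cast hd
  rw [W_eq, div_mul_eq_mul_div, div_le_div_iff_of_pos_right (Dq_pos hn)]
  exact Nq_upper hn hx

lemma a_upper {n : ℕ} (hn : 1 ≤ n) {d : ℕ} (hd : 1 ≤ d) :
    a n d ≤ (3 * 2 ^ (2 * n + 1) * ((2 * n + 2 : ℚ) ^ (2 * n - 1) / Dq n)) * (d : ℚ) ^ (2 * n) := by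
  set s := (Finset.Icc (-(d : ℤ)) (d : ℤ)).filter (fun i => i % 2 = (d : ℤ) % 2) with hs
  have hB : ∀ i ∈ s, 2 ^ (2 * n) * (g n i + g n (i - 1)) ≤ 2 ^ (2 * n) * (W n d + W n d) := by
    intro i hi
    rw [hs, Finset.mem_filter, Finset.mem_Icc] at hi
    have h1 : g n i ≤ W n d := g_le_W hn (by omega) (by omega)
    have h2 : g n (i - 1) ≤ W n d := g_le_W hn (by omega) (by omega)
    have : (0:ℚ) < 2 ^ (2 * n) := by positivity
    nlinarith
  have hsum : a n d ≤ (s.card : ℚ) * (2 ^ (2 * n) * (W n d + W n d)) := by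
    have := Finset.sum_le_card_nsmul s _ _ hB
    rw [nsmul_eq_mul] at this
    exact this
  have hcard : (s.card : ℚ) ≤ 3 * d := by
    have h1 : s.card ≤ (Finset.Icc (-(d : ℤ)) (d : ℤ)).card := Finset.card_filter_le _ _
    have h2 : (Finset.Icc (-(d : ℤ)) (d : ℤ)).card = 2 * d + 1 := by
      rw [Int.card_Icc]; omega
    have : s.card ≤ 3 * d := by omega
    exact_mod_cast this
  have hW : W n d ≤ (2 * n + 2 : ℚ) ^ (2 * n - 1) / Dq n * (d : ℚ) ^ (2 * n - 1) := W_ub hn hd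
  have hWpos : 0 < W n d := W_pos hn d
  have hdpos : (0:ℚ) < (d : ℚ) := by exact_mod_cast hd
  have hdpow : (d : ℚ) ^ (2 * n) = (d : ℚ) ^ (2 * n - 1) * d := by
    conv_lhs => rw [show 2 * n = (2 * n - 1) + 1 by omega]
    rw [pow_succ]
  have h2pos : (0:ℚ) < 2 ^ (2 * n) := by positivity
  calc a n d ≤ (s.card : ℚ) * (2 ^ (2 * n) * (W n d + W n d)) := hsum
    _ ≤ (3 * d) * (2 ^ (2 * n) * (W n d + W n d)) := by
        apply mul_le_mul_of_nonneg_right hcard; positivity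
    _ = (3 * 2 ^ (2 * n + 1)) * (W n d) * d := by ring
    _ ≤ (3 * 2 ^ (2 * n + 1)) * ((2 * n + 2 : ℚ) ^ (2 * n - 1) / Dq n * (d : ℚ) ^ (2 * n - 1)) * d := by
        have h3 : (0:ℚ) < 3 * 2 ^ (2 * n + 1) := by positivity
        apply mul_le_mul_of_nonneg_right _ hdpos.le
        exact mul_le_mul_of_nonneg_left hW h3.le
    _ = (3 * 2 ^ (2 * n + 1) * ((2 * n + 2 : ℚ) ^ (2 * n - 1) / Dq n)) * (d : ℚ) ^ (2 * n) := by
        rw [hdpow]; ring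

lemma a_lower {n : ℕ} (hn : 1 ≤ n) {d : ℕ} (hd : 1 ≤ d) :
    (1 / Dq n) * (d : ℚ) ^ (2 * n) ≤ a n d := by
  set s := (Finset.Icc (-(d : ℤ)) (d : ℤ)).filter (fun i => i % 2 = (d : ℤ) % 2) with hs
  set T := (Finset.range (d / 4 + 1)).image (fun t : ℕ => (d : ℤ) - 2 * t) with hT
  have hTs : T ⊆ s := by
    intro i hi
    rw [hT, Finset.mem_image] at hi
    obtain ⟨t, ht, rfl⟩ := hi
    rw [Finset.mem_range] at ht
    have ht' : t ≤ d / 4 := by omega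
    rw [hs, Finset.mem_filter, Finset.mem_Icc]
    constructor
    · constructor <;> omega
    · omega
  set L : ℚ := 2 ^ (2 * n) * (2 / Dq n * ((d : ℚ) / 2) ^ (2 * n - 1)) with hL
  have hdq : (0 : ℚ) < (d : ℚ) := by exact_mod_cast hd
  have hLpos : 0 < L := by
    rw [hL]
    have := Dq_pos hn
    positivity
  have hterm : ∀ i ∈ T, L ≤ 2 ^ (2 * n) * (g n i + g n (i - 1)) := by
    intro i hi
    rw [hT, Finset.mem_image] at hi
    obtain ⟨t, ht, rfl⟩ := hi
    rw [Finset.mem_range] at ht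
    have ht' : t ≤ d / 4 := by omega
    have hi1 : (1 : ℤ) ≤ (d : ℤ) - 2 * t := by omega
    have htq : ((t : ℚ)) ≤ (d : ℚ) / 4 := by
      calc ((t : ℚ)) ≤ ((d / 4 : ℕ) : ℚ) := by exact_mod_cast ht'
        _ ≤ (d : ℚ) / 4 := by
            have := Nat.cast_div_le (α := ℚ) (m := d) (n := 4)
            simpa using this
    have hiq : (d : ℚ) / 2 ≤ (((d : ℤ) - 2 * t : ℤ) : ℚ) := by
      push_cast
      linarith
    have hpow : ((d : ℚ) / 2) ^ (2 * n - 1) ≤ ((((d : ℤ) - 2 * t : ℤ) : ℚ)) ^ (2 * n - 1) :=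
      pow_le_pow_left₀ (by positivity) hiq _
    have hg := g_lb hn hi1
    have hg' : g n ((d : ℤ) - 2 * t - 1) ≥ 0 := g_nonneg hn _
    have h2 : (0:ℚ) < 2 ^ (2 * n) := by positivity
    have hDq := Dq_pos hn
    rw [hL]
    have step : 2 / Dq n * ((d : ℚ) / 2) ^ (2 * n - 1) ≤ g n ((d : ℤ) - 2 * t) := by
      calc 2 / Dq n * ((d : ℚ) / 2) ^ (2 * n - 1)
          ≤ 2 / Dq n * ((((d : ℤ) - 2 * t : ℤ) : ℚ)) ^ (2 * n - 1) := by
            apply mul_le_mul_of_nonneg_left hpow; positivity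
        _ ≤ g n ((d : ℤ) - 2 * t) := hg
    nlinarith
  have hcardT : T.card = d / 4 + 1 := by
    rw [hT, Finset.card_image_of_injective _ (fun a b h => by omega), Finset.card_range]
  have hsumT : (T.card : ℚ) * L ≤ ∑ i ∈ T, 2 ^ (2 * n) * (g n i + g n (i - 1)) := by
    have := Finset.card_nsmul_le_sum T _ _ hterm
    rwa [nsmul_eq_mul] at this
  have hsubset : ∑ i ∈ T, 2 ^ (2 * n) * (g n i + g n (i - 1)) ≤ a n d := by
    apply Finset.sum_le_sum_of_subset_of_nonneg hTs
    intro i _ _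
    have := g_nonneg hn i
    have := g_nonneg hn (i - 1)
    positivity
  have hcardq : (d : ℚ) / 4 ≤ (T.card : ℚ) := by
    rw [hcardT]
    have h4 : d ≤ 4 * (d / 4) + 4 := by omega
    have : (d : ℚ) ≤ 4 * ((d / 4 : ℕ) : ℚ) + 4 := by exact_mod_cast h4
    push_cast
    linarith
  have key : (d : ℚ) / 4 * L = 1 / Dq n * (d : ℚ) ^ (2 * n) := by
    rw [hL]
    have hDq := (Dq_pos hn).ne'
    rw [show 2 * n = (2 * n - 1) + 1 by omega]
    simp only [Nat.add_sub_cancel]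
    rw [pow_succ ((d:ℚ)) (2*n-1), pow_succ (2:ℚ) (2*n-1), div_pow]
    field_simp
    ring
  calc 1 / Dq n * (d : ℚ) ^ (2 * n) = (d : ℚ) / 4 * L := key.symm
    _ ≤ (T.card : ℚ) * L := by apply mul_le_mul_of_nonneg_right hcardq hLpos.le
    _ ≤ ∑ i ∈ T, 2 ^ (2 * n) * (g n i + g n (i - 1)) := hsumT
    _ ≤ a n d := hsubset

/-- There exist constants `k, k' > 0` depending only on `n` such that
`k·d^(2n) ≤ a(d) ≤ k'·d^(2n)` for all integers `d ≥ 1`. -/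
theorem stmt_5 (n : ℕ) (hn : 1 ≤ n) :
    ∃ k k' : ℚ, 0 < k ∧ 0 < k' ∧
      ∀ d : ℕ, 1 ≤ d →
        k * (d : ℚ) ^ (2 * n) ≤ a n d ∧ a n d ≤ k' * (d : ℚ) ^ (2 * n) := by
  refine ⟨1 / Dq n, 3 * 2 ^ (2 * n + 1) * ((2 * n + 2 : ℚ) ^ (2 * n - 1) / Dq n), ?_, ?_, ?_⟩
  · have := Dq_pos hn; positivity
  · have h1 : (1 : ℚ) ≤ (n : ℚ) := by exact_mod_cast hn
    have := Dq_pos hn; positivity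
  · intro d hd
    exact ⟨a_lower hn hd, a_upper hn hd⟩
end

section
/- The rate of growth of the sequence d ↦ 2^(2n)·(W(n,d) + W(n,d-1)) equals 2n; that is, the smallest nonnegative integer c for which there exists a constant C > 0 with 2^(2n)·(W(n,d)+W(n,d-1)) ≤ C·d^(c-1) for all integers d ≥ 1 is c = 2n. (This is the arithmetic content of the statement that the complexity of the trivial Kac module over osp(2|2n) equals 2n.) -/
lemma Pden_pos (n : ℕ) (hn : 1 ≤ n) :
    0 < (2 * n : ℚ) * ∏ j ∈ Finset.Icc 2 n, (((j : ℚ) - 1) * ((2 * n : ℚ) - (j : ℚ) + 1)) := by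
  apply mul_pos
  · have : (1:ℚ) ≤ n := by exact_mod_cast hn
    linarith
  · apply Finset.prod_pos
    intro j hj
    obtain ⟨h2, hjn⟩ := Finset.mem_Icc.mp hj
    have h2' : (2:ℚ) ≤ j := by exact_mod_cast h2
    have hjn' : (j:ℚ) ≤ n := by exact_mod_cast hjn
    nlinarith

lemma Pnum_le (n : ℕ) (hn : 1 ≤ n) {r d : ℕ} (hrd : r ≤ d) (hd : 1 ≤ d) :
    ∏ j ∈ Finset.Icc 2 n, (((r : ℚ) + (j : ℚ) - 1) * ((2 * n : ℚ) + (r : ℚ) - (j : ℚ) + 1))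
      ≤ (2 * (n:ℚ)^2 * (d:ℚ)^2) ^ (n - 1) := by
  calc _ ≤ ∏ _j ∈ Finset.Icc 2 n, (2 * (n:ℚ)^2 * (d:ℚ)^2) := by
        apply Finset.prod_le_prod
        · intro j hj
          obtain ⟨h2, hjn⟩ := Finset.mem_Icc.mp hj
          have h2' : (2:ℚ) ≤ j := by exact_mod_cast h2
          have hjn' : (j:ℚ) ≤ n := by exact_mod_cast hjn
          have hr' : (0:ℚ) ≤ r := by positivity
          nlinarith
        · intro j hj
          obtain ⟨h2, hjn⟩ := Finset.mem_Icc.mp hj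
          have h2' : (2:ℚ) ≤ j := by exact_mod_cast h2
          have hjn' : (j:ℚ) ≤ n := by exact_mod_cast hjn
          have hrd' : (r:ℚ) ≤ d := by exact_mod_cast hrd
          have hd' : (1:ℚ) ≤ d := by exact_mod_cast hd
          have hr' : (0:ℚ) ≤ r := by positivity
          have hn' : (1:ℚ) ≤ n := by exact_mod_cast hn
          have h1 : (r:ℚ) + j - 1 ≤ n * d := by nlinarith
          have h2 : (2 * n : ℚ) + r - j + 1 ≤ 2 * n * d := by nlinarith
          have h1p : (0:ℚ) ≤ (r:ℚ) + j - 1 := by nlinarith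
          nlinarith
  _ = (2 * (n:ℚ)^2 * (d:ℚ)^2) ^ (n - 1) := by
        rw [Finset.prod_const, Nat.card_Icc]; congr 1

lemma Pnum_ge (n : ℕ) {d : ℕ} (hd : 1 ≤ d) :
    ((d:ℚ)^2) ^ (n - 1) ≤
      ∏ j ∈ Finset.Icc 2 n, (((d : ℚ) + (j : ℚ) - 1) * ((2 * n : ℚ) + (d : ℚ) - (j : ℚ) + 1)) := by
  calc ((d:ℚ)^2) ^ (n-1) = ∏ _j ∈ Finset.Icc 2 n, ((d:ℚ)^2) := by
        rw [Finset.prod_const, Nat.card_Icc]; congr 1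
  _ ≤ _ := by
        apply Finset.prod_le_prod
        · intro j hj; positivity
        · intro j hj
          obtain ⟨h2, hjn⟩ := Finset.mem_Icc.mp hj
          have h2' : (2:ℚ) ≤ j := by exact_mod_cast h2
          have hjn' : (j:ℚ) ≤ n := by exact_mod_cast hjn
          have hd' : (1:ℚ) ≤ d := by exact_mod_cast hd
          nlinarith

lemma Pnum_nonneg (n r : ℕ) :
    0 ≤ ∏ j ∈ Finset.Icc 2 n, (((r : ℚ) + (j : ℚ) - 1) * ((2 * n : ℚ) + (r : ℚ) - (j : ℚ) + 1)) := by
  apply Finset.prod_nonneg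
  intro j hj
  obtain ⟨h2, hjn⟩ := Finset.mem_Icc.mp hj
  have h2' : (2:ℚ) ≤ j := by exact_mod_cast h2
  have hjn' : (j:ℚ) ≤ n := by exact_mod_cast hjn
  have hr' : (0:ℚ) ≤ r := by positivity
  nlinarith

lemma dpow_eq (n d : ℕ) (hn : 1 ≤ n) :
    (d:ℚ) * ((d:ℚ)^2)^(n-1) = (d:ℚ)^(2*n-1) := by
  rw [← pow_mul, ← pow_succ']
  congr 1
  omega

lemma W_le (n : ℕ) (hn : 1 ≤ n) {r d : ℕ} (hrd : r ≤ d) (hd : 1 ≤ d) :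
    W n r ≤ ((2 * (n:ℚ) + 2) * (2 * (n:ℚ)^2)^(n-1) /
        ((2 * n : ℚ) * ∏ j ∈ Finset.Icc 2 n, (((j : ℚ) - 1) * ((2 * n : ℚ) - (j : ℚ) + 1)))) *
      (d:ℚ)^(2*n-1) := by
  have hD := Pden_pos n hn
  have hrd' : (r:ℚ) ≤ d := by exact_mod_cast hrd
  have hd' : (1:ℚ) ≤ d := by exact_mod_cast hd
  have hr' : (0:ℚ) ≤ r := by positivity
  have hn' : (1:ℚ) ≤ n := by exact_mod_cast hn
  have hnum : (2 * n + 2 * r : ℚ) *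
      (∏ j ∈ Finset.Icc 2 n, (((r : ℚ) + (j : ℚ) - 1) * ((2 * n : ℚ) + (r : ℚ) - (j : ℚ) + 1)))
      ≤ (2 * (n:ℚ) + 2) * (2 * (n:ℚ)^2)^(n-1) * (d:ℚ)^(2*n-1) := by
    have h1 : (2 * n + 2 * r : ℚ) ≤ (2 * (n:ℚ) + 2) * d := by nlinarith
    have h2 := Pnum_le n hn hrd hd
    have h1p : (0:ℚ) ≤ 2 * n + 2 * r := by positivity
    have h2p := Pnum_nonneg n r
    calc _ ≤ ((2 * (n:ℚ) + 2) * d) * ((2 * (n:ℚ)^2 * (d:ℚ)^2) ^ (n - 1)) :=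
          mul_le_mul h1 h2 h2p (by positivity)
    _ = (2 * (n:ℚ) + 2) * (2 * (n:ℚ)^2)^(n-1) * ((d:ℚ) * ((d:ℚ)^2)^(n-1)) := by
          rw [mul_pow]; ring
    _ = _ := by rw [dpow_eq n d hn]
  rw [W, div_mul_eq_mul_div, div_le_div_iff₀ hD hD]
  calc _ ≤ ((2 * (n:ℚ) + 2) * (2 * (n:ℚ)^2)^(n-1) * (d:ℚ)^(2*n-1)) *
        ((2 * n : ℚ) * ∏ j ∈ Finset.Icc 2 n, (((j : ℚ) - 1) * ((2 * n : ℚ) - (j : ℚ) + 1))) := by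
        apply mul_le_mul_of_nonneg_right hnum hD.le
  _ = _ := by ring

lemma W_ge (n : ℕ) (hn : 1 ≤ n) {d : ℕ} (hd : 1 ≤ d) :
    (2 * (d:ℚ)^(2*n-1)) /
        ((2 * n : ℚ) * ∏ j ∈ Finset.Icc 2 n, (((j : ℚ) - 1) * ((2 * n : ℚ) - (j : ℚ) + 1)))
      ≤ W n d := by
  have hD := Pden_pos n hn
  have hd' : (1:ℚ) ≤ d := by exact_mod_cast hd
  have hnum : 2 * (d:ℚ)^(2*n-1) ≤ (2 * n + 2 * d : ℚ) *
      (∏ j ∈ Finset.Icc 2 n, (((d : ℚ) + (j : ℚ) - 1) * ((2 * n : ℚ) + (d : ℚ) - (j : ℚ) + 1))) := by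
    have h2 := Pnum_ge n hd (d := d)
    have hn' : (1:ℚ) ≤ n := by exact_mod_cast hn
    calc 2 * (d:ℚ)^(2*n-1) = (2 * (d:ℚ)) * (((d:ℚ)^2)^(n-1)) := by
          rw [← dpow_eq n d hn]; ring
    _ ≤ _ := by
          apply mul_le_mul (by linarith) h2 (by positivity) (by linarith)
  rw [W, div_le_div_iff₀ hD hD]
  calc 2 * (d:ℚ)^(2*n-1) *
        ((2 * n : ℚ) * ∏ j ∈ Finset.Icc 2 n, (((j : ℚ) - 1) * ((2 * n : ℚ) - (j : ℚ) + 1)))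
      ≤ ((2 * n + 2 * d : ℚ) *
        (∏ j ∈ Finset.Icc 2 n, (((d : ℚ) + (j : ℚ) - 1) * ((2 * n : ℚ) + (d : ℚ) - (j : ℚ) + 1)))) *
        ((2 * n : ℚ) * ∏ j ∈ Finset.Icc 2 n, (((j : ℚ) - 1) * ((2 * n : ℚ) - (j : ℚ) + 1))) :=
        mul_le_mul_of_nonneg_right hnum hD.le
  _ = _ := by ring

lemma W_nonneg (n r : ℕ) (hn : 1 ≤ n) : 0 ≤ W n r := by
  have hD := Pden_pos n hn
  have h1 : (0:ℚ) ≤ 2 * n + 2 * r := by positivity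
  exact div_nonneg (mul_nonneg h1 (Pnum_nonneg n r)) hD.le

/-- The rate of growth of `d ↦ 2^(2n)·(W(n,d) + W(n,d-1))` equals `2n`: the least
natural number `c` for which there is a constant `C > 0` with
`2^(2n)·(W(n,d)+W(n,d-1)) ≤ C·d^(c-1)` for all `d ≥ 1` is `c = 2n`. -/
theorem stmt_8 (n : ℕ) (hn : 1 ≤ n) :
    IsLeast {c : ℕ | ∃ C : ℚ, 0 < C ∧
        ∀ d : ℕ, 1 ≤ d → 2 ^ (2 * n) * (W n d + W n (d - 1)) ≤ C * (d : ℚ) ^ ((c : ℤ) - 1)}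
      (2 * n) := by
  have hD := Pden_pos n hn
  set D : ℚ := (2 * n : ℚ) * ∏ j ∈ Finset.Icc 2 n, (((j : ℚ) - 1) * ((2 * n : ℚ) - (j : ℚ) + 1))
    with hDdef
  have hn' : (1:ℚ) ≤ n := by exact_mod_cast hn
  constructor
  · -- membership
    refine ⟨2 ^ (2*n) * (2 * ((2 * (n:ℚ) + 2) * (2 * (n:ℚ)^2)^(n-1) / D)), ?_, ?_⟩
    · have hM : (0:ℚ) < (2 * (n:ℚ) + 2) * (2 * (n:ℚ)^2)^(n-1) := by positivity
      positivity
    · intro d hd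
      have h1 := W_le n hn (le_refl d) hd
      have h2 := W_le n hn (Nat.sub_le d 1) hd
      have hzp : ((d:ℚ)) ^ (((2*n:ℕ):ℤ) - 1) = (d:ℚ)^(2*n-1 : ℕ) := by
        rw [show ((2*n:ℕ):ℤ) - 1 = ((2*n-1:ℕ):ℤ) by omega, zpow_natCast]
      rw [hzp]
      have hpow : (0:ℚ) < 2 ^ (2*n) := by positivity
      rw [← hDdef] at h1 h2
      calc (2:ℚ) ^ (2 * n) * (W n d + W n (d - 1))
          ≤ 2 ^ (2*n) * ((2 * (n:ℚ) + 2) * (2 * (n:ℚ)^2)^(n-1) / D * (d:ℚ)^(2*n-1)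
              + (2 * (n:ℚ) + 2) * (2 * (n:ℚ)^2)^(n-1) / D * (d:ℚ)^(2*n-1)) := by
            apply mul_le_mul_of_nonneg_left _ hpow.le
            exact add_le_add h1 h2
      _ = 2 ^ (2*n) * (2 * ((2 * (n:ℚ) + 2) * (2 * (n:ℚ)^2)^(n-1) / D)) * (d:ℚ)^(2*n-1) := by
            ring
  · -- lower bound
    rintro c ⟨C, hC, h⟩
    by_contra hc
    push_neg at hc
    -- choose d large
    obtain ⟨m, hm⟩ := exists_nat_gt (C * D / 2)
    set d : ℕ := m + 1 with hddef
    have hd1 : 1 ≤ d := Nat.le_add_left 1 m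
    have hd' : (1:ℚ) ≤ d := by exact_mod_cast hd1
    have hdm : C * D / 2 < (d:ℚ) := by
      have : (m:ℚ) ≤ d := by exact_mod_cast Nat.le_succ m
      linarith
    have key := h d hd1
    have hlow := W_ge n hn hd1
    rw [← hDdef] at hlow
    have hWnn := W_nonneg n (d-1) hn
    have hWd := W_nonneg n d hn
    have hone : (1:ℚ) ≤ 2 ^ (2*n) := one_le_pow₀ (by norm_num : (1:ℚ) ≤ 2)
    have hstep : 2 * (d:ℚ)^(2*n-1) / D ≤ C * (d:ℚ) ^ ((c:ℤ) - 1) := by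
      calc 2 * (d:ℚ)^(2*n-1) / D ≤ W n d := hlow
      _ ≤ 2 ^ (2*n) * (W n d + W n (d-1)) := by nlinarith
      _ ≤ C * (d:ℚ) ^ ((c:ℤ) - 1) := key
    have hmono : ((d:ℚ)) ^ ((c:ℤ) - 1) ≤ ((d:ℚ)) ^ (((2*n-2:ℕ):ℤ)) := by
      apply zpow_le_zpow_right₀ hd'
      omega
    have hzp2 : ((d:ℚ)) ^ (((2*n-2:ℕ):ℤ)) = (d:ℚ)^(2*n-2 : ℕ) := zpow_natCast _ _
    have hXpos : (0:ℚ) < (d:ℚ)^(2*n-2 : ℕ) := by positivity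
    have hsplit : (d:ℚ)^(2*n-1 : ℕ) = (d:ℚ)^(2*n-2 : ℕ) * d := by
      rw [← pow_succ]
      congr 1
      omega
    have hfinal : 2 * (d:ℚ)^(2*n-1 : ℕ) / D ≤ C * (d:ℚ)^(2*n-2 : ℕ) := by
      calc 2 * (d:ℚ)^(2*n-1 : ℕ) / D ≤ C * (d:ℚ) ^ ((c:ℤ) - 1) := hstep
      _ ≤ C * (d:ℚ)^(2*n-2 : ℕ) := by
          rw [← hzp2]
          exact mul_le_mul_of_nonneg_left hmono hC.le
    rw [hsplit, div_le_iff₀ hD] at hfinal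
    -- hfinal : 2 * ((d:ℚ)^(2n-2) * d) ≤ C * d^(2n-2) * D
    have hgt : C * D < 2 * (d:ℚ) := by linarith
    nlinarith [mul_lt_mul_of_pos_right hgt hXpos]
end
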